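/- arXiv:0912.5468 — 8 statements merged into one kernel-verified Lean document; each statement's English description precedes it below -/
import Mathlib

section
/- Let G be a claw-free graph and let s be a vertex of G. Let G' be the graph obtained from G by adding an edge between every pair of distinct non-adjacent neighbors of s (so that s becomes a simplicial vertex of G'). Then G' is claw-free. -/
/-!
Every edge of `G` is an edge of `G'`, so a claw of `G'` whose three spokes are edges of `G`
is already a claw of `G`. If instead a spoke `x a` is new, then `s` is adjacent in `G` to both
`x` and `a`. As `a` is adjacent in `G'` to neither of the other leaves `b`, `c`, these are not
neighbours of `s`; hence `x b`, `x c` are edges of `G`, and `s`, `b`, `c` are the leaves of a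
claw of `G` centred at `x`.
-/

/-- A graph is claw-free if it has no induced subgraph isomorphic to the claw `K_{1,3}`:
a center `x` adjacent to three pairwise distinct, pairwise non-adjacent leaves. -/
def ClawFree {V : Type*} (G : SimpleGraph V) : Prop :=
  ¬ ∃ x a b c : V, G.Adj x a ∧ G.Adj x b ∧ G.Adj x c ∧
      a ≠ b ∧ a ≠ c ∧ b ≠ c ∧ ¬ G.Adj a b ∧ ¬ G.Adj a c ∧ ¬ G.Adj b c

section Claw

variable {V : Type*}

def IsClaw (G : SimpleGraph V) (x a b c : V) : Prop :=
  G.Adj x a ∧ G.Adj x b ∧ G.Adj x c ∧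
    a ≠ b ∧ a ≠ c ∧ b ≠ c ∧ ¬ G.Adj a b ∧ ¬ G.Adj a c ∧ ¬ G.Adj b c

theorem clawFree_iff {G : SimpleGraph V} : ClawFree G ↔ ∀ x a b c, ¬ IsClaw G x a b c := by
  simp only [ClawFree, IsClaw, not_exists]

namespace IsClaw

variable {G H : SimpleGraph V} {x a b c : V}

theorem swap_left (h : IsClaw G x a b c) : IsClaw G x b a c := by
  obtain ⟨hxa, hxb, hxc, hab, hac, hbc, nab, nac, nbc⟩ := h
  exact ⟨hxb, hxa, hxc, hab.symm, hbc, hac, fun h ↦ nab h.symm, nbc, nac⟩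

theorem swap_outer (h : IsClaw G x a b c) : IsClaw G x c b a := by
  obtain ⟨hxa, hxb, hxc, hab, hac, hbc, nab, nac, nbc⟩ := h
  exact ⟨hxc, hxb, hxa, hbc.symm, hac.symm, hab.symm,
    fun h ↦ nbc h.symm, fun h ↦ nac h.symm, fun h ↦ nab h.symm⟩

theorem of_le (hGH : G ≤ H) (h : IsClaw H x a b c)
    (hxa : G.Adj x a) (hxb : G.Adj x b) (hxc : G.Adj x c) : IsClaw G x a b c := by
  obtain ⟨-, -, -, hab, hac, hbc, nab, nac, nbc⟩ := h
  exact ⟨hxa, hxb, hxc, hab, hac, hbc,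
    fun h ↦ nab (hGH h), fun h ↦ nac (hGH h), fun h ↦ nbc (hGH h)⟩

end IsClaw

end Claw

section LocalCompletion

variable {V : Type*} {G G' : SimpleGraph V} {s : V}
  -- `G'` is the local completion of `G` at `s`.
  (hG' : ∀ a b : V, G'.Adj a b ↔ a ≠ b ∧ (G.Adj a b ∨ (G.Adj s a ∧ G.Adj s b)))
include hG'

theorem le_localCompletion : G ≤ G' :=
  fun a b h ↦ (hG' a b).mpr ⟨h.ne, .inl h⟩

theorem adj_of_adj_localCompletion {a b : V} (hab : G'.Adj a b) (hsa : ¬ G.Adj s a) :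
    G.Adj a b := by
  obtain ⟨-, h | ⟨h, -⟩⟩ := (hG' a b).mp hab
  exacts [h, absurd h hsa]

theorem isClaw_of_isClaw_localCompletion_of_not_adj {x a b c : V} (h : IsClaw G' x a b c)
    (hxa : ¬ G.Adj x a) : IsClaw G x s b c := by
  obtain ⟨hxa', hxb', hxc', hab, hac, hbc, nab, nac, nbc⟩ := h
  obtain ⟨hsx, hsa⟩ : G.Adj s x ∧ G.Adj s a := by
    obtain ⟨-, h | h⟩ := (hG' x a).mp hxa'
    exacts [absurd h hxa, h]
  have hle := le_localCompletion hG'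
  have hsb : ¬ G.Adj s b := fun hsb ↦ nab ((hG' a b).mpr ⟨hab, .inr ⟨hsa, hsb⟩⟩)
  have hsc : ¬ G.Adj s c := fun hsc ↦ nac ((hG' a c).mpr ⟨hac, .inr ⟨hsa, hsc⟩⟩)
  have hsb' : s ≠ b := by rintro rfl; exact nab (hle hsa.symm)
  have hsc' : s ≠ c := by rintro rfl; exact nac (hle hsa.symm)
  exact ⟨hsx.symm, (adj_of_adj_localCompletion hG' hxb'.symm hsb).symm,
    (adj_of_adj_localCompletion hG' hxc'.symm hsc).symm, hsb', hsc', hbc, hsb, hsc,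
    fun h ↦ nbc (hle h)⟩

theorem exists_isClaw_of_isClaw_localCompletion {x a b c : V} (h : IsClaw G' x a b c) :
    ∃ y a' b' c', IsClaw G y a' b' c' := by
  by_cases hxa : G.Adj x a
  · by_cases hxb : G.Adj x b
    · by_cases hxc : G.Adj x c
      · exact ⟨x, a, b, c, h.of_le (le_localCompletion hG') hxa hxb hxc⟩
      · exact ⟨x, s, b, a, isClaw_of_isClaw_localCompletion_of_not_adj hG' h.swap_outer hxc⟩
    · exact ⟨x, s, a, c, isClaw_of_isClaw_localCompletion_of_not_adj hG' h.swap_left hxb⟩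
  · exact ⟨x, s, b, c, isClaw_of_isClaw_localCompletion_of_not_adj hG' h hxa⟩

end LocalCompletion

/-- Let `G` be claw-free with a vertex `s`, and let `G'` be obtained from `G` by adding an
edge between every pair of distinct non-adjacent neighbors of `s` (so `s` becomes a
simplicial vertex of `G'`). Then `G'` is claw-free. -/
theorem stmt4 {V : Type*} (G : SimpleGraph V) (hG : ClawFree G) (s : V)
    (G' : SimpleGraph V)
    (hG' : ∀ a b : V, G'.Adj a b ↔ a ≠ b ∧ (G.Adj a b ∨ (G.Adj s a ∧ G.Adj s b))) :
    ClawFree G' := by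
  rw [clawFree_iff] at hG ⊢
  intro x a b c hclaw
  obtain ⟨y, a', b', c', hclaw'⟩ := exists_isClaw_of_isClaw_localCompletion hG' hclaw
  exact hG y a' b' c' hclaw'
end

section
/- Let (G; t_1,...,t_k) be a simple instance with G claw-free, and let u be a vertex of G whose neighborhood N(u) contains the vertex set of an induced cycle of G of length five. Then (G; t_1,...,t_k) has a solution if and only if (G - u; t_1,...,t_k) has a solution, where G - u is the subgraph of G induced by V(G) \ {u}. -/
/-- `l` is the list of consecutive vertices of an induced path of `G`:
its vertices are distinct and two of them are adjacent in `G` exactly when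
they are consecutive in `l`. -/
def IsInducedPathList {V : Type*} (G : SimpleGraph V) (l : List V) : Prop :=
  l.Nodup ∧ ∀ i j : Fin l.length,
    G.Adj (l.get i) (l.get j) ↔ (i.1 + 1 = j.1 ∨ j.1 + 1 = i.1)

/-- `l` is a solution for the instance `(G; t 0, …, t (k-1))`: an induced path with
endpoints `t 0` and `t (k-1)` that contains every terminal, the terminals appearing
along the path in the order `t 0, t 1, …, t (k-1)`. -/
def IsSolution {V : Type*} (G : SimpleGraph V) {k : ℕ} (t : Fin k → V) (l : List V) : Prop :=
  IsInducedPathList G l ∧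
  ∃ pos : Fin k → Fin l.length,
    StrictMono pos ∧ (∀ i, l.get (pos i) = t i) ∧
    (∀ i : Fin k, i.1 = 0 → (pos i).1 = 0) ∧
    (∀ i : Fin k, i.1 = k - 1 → (pos i).1 = l.length - 1)

/-- The instance `(G; t 0, …, t (k-1))` is simple: the terminals are distinct, the two end
terminals have degree one in `G`, every other terminal has degree two in `G` with its two
neighbors non-adjacent, distinct terminals are at distance at least four, and `G` is
connected. -/
def SimpleInstance {V : Type*} (G : SimpleGraph V) {k : ℕ} (t : Fin k → V) : Prop :=
  2 ≤ k ∧ Function.Injective t ∧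
  (∀ i : Fin k, (i.1 = 0 ∨ i.1 = k - 1) → (G.neighborSet (t i)).ncard = 1) ∧
  (∀ i : Fin k, i.1 ≠ 0 → i.1 ≠ k - 1 →
      (G.neighborSet (t i)).ncard = 2 ∧
      ∀ x y : V, G.Adj (t i) x → G.Adj (t i) y → x ≠ y → ¬ G.Adj x y) ∧
  (∀ i j : Fin k, i ≠ j → 4 ≤ G.dist (t i) (t j)) ∧
  G.Connected

/-! If a solution passes through `u`, the neighbours `p`, `q` of `u` on it are non-adjacent
vertices of `N(u)`. By claw-freeness at `u`, the cycle neighbours of a vertex of `N(u)` off the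
five-cycle meet every non-adjacent pair of the cycle, and this forces `p` and `q` to have a common
neighbour `c` on the cycle. Claw-freeness at `c` confines the neighbours of `c` on the path to
within distance two of `u`, and `p`, `q` are not terminals because their neighbours `u`, `c` are
adjacent. Hence replacing the stretch of the path between the first and the last neighbour of `c`
by `c` itself gives a solution avoiding `u`. -/

open SimpleGraph

theorem cycleGraph_five_exists_adj_adj :
    ∀ i j : Fin 5, i ≠ j → ¬ (cycleGraph 5).Adj i j →
      ∃ m, (cycleGraph 5).Adj i m ∧ (cycleGraph 5).Adj j m := by
  decide

set_option synthInstance.maxSize 1000 in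
theorem cycleGraph_five_exists_adj_mem :
    ∀ (i : Fin 5) (T : Finset (Fin 5)),
      (∀ x y, x ≠ y → ¬ (cycleGraph 5).Adj x y → x ∈ T ∨ y ∈ T) →
      ∃ m, (cycleGraph 5).Adj i m ∧ m ∈ T := by
  decide

set_option synthInstance.maxSize 1000 in
theorem cycleGraph_five_exists_mem_mem :
    ∀ S T : Finset (Fin 5),
      (∀ x y, x ≠ y → ¬ (cycleGraph 5).Adj x y → x ∈ S ∨ y ∈ S) →
      (∀ x y, x ≠ y → ¬ (cycleGraph 5).Adj x y → x ∈ T ∨ y ∈ T) →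
      ∃ m, m ∈ S ∧ m ∈ T := by
  decide

section

variable {V : Type*} {G : SimpleGraph V} {l : List V} {a b : ℕ} {c : V}

theorem ClawFree.adj_or_adj (hG : ClawFree G) {u x y w : V}
    (hx : G.Adj u x) (hy : G.Adj u y) (hw : G.Adj u w) (hxy : x ≠ y) (hnxy : ¬ G.Adj x y)
    (hwx : w ≠ x) (hwy : w ≠ y) : G.Adj w x ∨ G.Adj w y := by
  by_contra! h
  exact hG ⟨u, w, x, y, hw, hx, hy, hwx, hwy, hxy, h.1, h.2, hnxy⟩

theorem SimpleInstance.not_adj_of_adj_terminal {k : ℕ} {t : Fin k → V}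
    (hsi : SimpleInstance G t) (i : Fin k) {x y : V} (hx : G.Adj (t i) x)
    (hy : G.Adj (t i) y) (hxy : x ≠ y) : ¬ G.Adj x y := by
  obtain ⟨-, -, hend, hinner, -⟩ := hsi
  by_cases hi : i.1 = 0 ∨ i.1 = k - 1
  · obtain ⟨z, hz⟩ := Set.ncard_eq_one.mp (hend i hi)
    have hx' : x ∈ G.neighborSet (t i) := hx
    have hy' : y ∈ G.neighborSet (t i) := hy
    rw [hz] at hx' hy'
    exact absurd (hx'.trans hy'.symm) hxy
  · rw [not_or] at hi
    exact (hinner i hi.1 hi.2).2 x y hx hy hxy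

theorem ClawFree.exists_adj_adj_of_cycle5 (hG : ClawFree G)
    (f : cycleGraph 5 ↪g G) {u p q : V} (hf : ∀ i, G.Adj u (f i)) (hp : G.Adj u p)
    (hq : G.Adj u q) (hpq : p ≠ q) (hnpq : ¬ G.Adj p q) :
    ∃ i, G.Adj p (f i) ∧ G.Adj q (f i) := by
  classical
  let N (w : V) : Finset (Fin 5) := {i | G.Adj w (f i)}
  have cover : ∀ w, G.Adj u w → w ∉ Set.range f →
      ∀ x y, x ≠ y → ¬ (cycleGraph 5).Adj x y → x ∈ N w ∨ y ∈ N w := by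
    intro w hw hwf x y hxy hnxy
    simpa [N] using hG.adj_or_adj (hf x) (hf y) hw (f.injective.ne hxy)
      (fun h => hnxy (f.map_adj_iff.mp h)) (fun h => hwf ⟨x, h.symm⟩) (fun h => hwf ⟨y, h.symm⟩)
  by_cases hpf : p ∈ Set.range f <;> by_cases hqf : q ∈ Set.range f
  · obtain ⟨⟨i, rfl⟩, ⟨j, rfl⟩⟩ := And.intro hpf hqf
    obtain ⟨m, him, hjm⟩ := cycleGraph_five_exists_adj_adj i j (f.injective.ne_iff.mp hpq)
      (fun h => hnpq (f.map_adj_iff.mpr h))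
    exact ⟨m, f.map_adj_iff.mpr him, f.map_adj_iff.mpr hjm⟩
  · obtain ⟨i, rfl⟩ := hpf
    obtain ⟨m, him, hm⟩ := cycleGraph_five_exists_adj_mem i (N q) (cover q hq hqf)
    exact ⟨m, f.map_adj_iff.mpr him, by simpa [N] using hm⟩
  · obtain ⟨j, rfl⟩ := hqf
    obtain ⟨m, hjm, hm⟩ := cycleGraph_five_exists_adj_mem j (N p) (cover p hp hpf)
    exact ⟨m, by simpa [N] using hm, f.map_adj_iff.mpr hjm⟩
  · obtain ⟨m, hmp, hmq⟩ := cycleGraph_five_exists_mem_mem (N p) (N q) (cover p hp hpf)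
      (cover q hq hqf)
    exact ⟨m, by simpa [N] using hmp, by simpa [N] using hmq⟩

theorem isInducedPathList_iff :
    IsInducedPathList G l ↔ l.Nodup ∧ ∀ (i j : ℕ) (hi : i < l.length) (hj : j < l.length),
      G.Adj l[i] l[j] ↔ (i + 1 = j ∨ j + 1 = i) := by
  simp only [IsInducedPathList, Fin.forall_iff, List.get_eq_getElem]
  exact and_congr_right fun _ => ⟨fun h i j hi hj => h i hi j hj, fun h i hi j hj => h i j hi hj⟩

theorem isInducedPathList_map_iff {W : Type*} {H : SimpleGraph W} (φ : H ↪g G) {l : List W} :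
    IsInducedPathList G (l.map φ) ↔ IsInducedPathList H l := by
  simp [isInducedPathList_iff, List.nodup_map_iff φ.injective]

theorem isSolution_map_iff {W : Type*} {H : SimpleGraph W} (φ : H ↪g G) {k : ℕ}
    {t : Fin k → W} {l : List W} :
    IsSolution G (φ ∘ t) (l.map φ) ↔ IsSolution H t l := by
  have hlen : (l.map φ).length = l.length := l.length_map _
  simp only [IsSolution, isInducedPathList_map_iff]
  refine and_congr_right fun _ =>
    ⟨fun ⟨pos, hmono, hget, h0, hlast⟩ => ?_, fun ⟨pos, hmono, hget, h0, hlast⟩ => ?_⟩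
  · refine ⟨Fin.cast hlen ∘ pos, hmono, fun i => φ.injective ?_, h0, fun i hi => ?_⟩
    · simpa using hget i
    · simpa [hlen] using hlast i hi
  · refine ⟨Fin.cast hlen.symm ∘ pos, hmono, fun i => ?_, h0, fun i hi => ?_⟩
    · simpa using congrArg φ (hget i)
    · simpa [hlen] using hlast i hi

theorem exists_isSolution_induce_iff {k : ℕ} {t : Fin k → V} {s : Set V} (ht : ∀ i, t i ∈ s) :
    (∃ l : List s, IsSolution (G.induce s) (fun i => ⟨t i, ht i⟩) l) ↔
      ∃ l : List V, IsSolution G t l ∧ ∀ v ∈ l, v ∈ s := by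
  constructor
  · rintro ⟨l, hl⟩
    refine ⟨l.map (Embedding.induce s), (isSolution_map_iff _).2 hl, fun v hv => ?_⟩
    obtain ⟨w, -, rfl⟩ := List.mem_map.mp hv
    exact w.2
  · rintro ⟨l, hl, hs⟩
    lift l to List s using hs
    exact ⟨l, (isSolution_map_iff (Embedding.induce s)).1 hl⟩

def shortcut (l : List V) (a b : ℕ) (c : V) : List V := l.take (a + 1) ++ c :: l.drop b

theorem length_shortcut (hab : a < b) (hb : b ≤ l.length) :
    (shortcut l a b c).length = a + 2 + (l.length - b) := by
  simp only [shortcut, List.length_append, List.length_take, List.length_cons, List.length_drop]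
  omega

theorem getElem_shortcut_self (hab : a < b) (hb : b ≤ l.length) :
    (shortcut l a b c)[a + 1]'(by rw [length_shortcut hab hb]; omega) = c := by
  have : (l.take (a + 1)).length = a + 1 := by rw [List.length_take]; omega
  simp [shortcut, List.getElem_append_right, this]

theorem getElem_shortcut_of_ne (hab : a < b) (hb : b ≤ l.length) {i : ℕ}
    (hi : i < (shortcut l a b c).length) (hia : i ≠ a + 1) :
    (shortcut l a b c)[i] = l[if i ≤ a then i else i + b - (a + 2)]'(by
      rw [length_shortcut hab hb] at hi; split <;> omega) := by
  have : (l.take (a + 1)).length = a + 1 := by rw [List.length_take]; omega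
  simp only [shortcut, List.getElem_append, List.getElem_take, List.getElem_cons,
    List.getElem_drop, this]
  split_ifs <;> first | omega | congr 1 <;> omega

theorem nodup_shortcut (hl : l.Nodup) (hab : a < b) (hc : c ∉ l) : (shortcut l a b c).Nodup := by
  rw [shortcut, List.nodup_middle, List.nodup_cons]
  refine ⟨fun h => hc ?_, hl.sublist ?_⟩
  · rcases List.mem_append.mp h with h | h
    exacts [List.mem_of_mem_take h, List.mem_of_mem_drop h]
  · conv_rhs => rw [← List.take_append_drop (a + 1) l]
    exact (List.Sublist.refl _).append (List.drop_sublist_drop_left l hab)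

theorem isInducedPathList_shortcut (hl : IsInducedPathList G l)
    (hab : a + 2 ≤ b) (hb : b < l.length) (hc : c ∉ l) (hca : G.Adj c l[a])
    (hcb : G.Adj c l[b]) (hout : ∀ j (hj : j < l.length), j < a ∨ b < j → ¬ G.Adj c l[j]) :
    IsInducedPathList G (shortcut l a b c) := by
  rw [isInducedPathList_iff] at hl ⊢
  obtain ⟨hnd, hadj⟩ := hl
  have hcl : ∀ j (hj : j < l.length), ¬ (a < j ∧ j < b) → (G.Adj c l[j] ↔ j = a ∨ j = b) := by
    intro j hj hjab
    rcases lt_trichotomy j a with h | rfl | h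
    · exact iff_of_false (hout j hj (Or.inl h)) (by omega)
    · exact iff_of_true hca (Or.inl rfl)
    · rcases lt_trichotomy j b with h' | rfl | h'
      · omega
      · exact iff_of_true hcb (Or.inr rfl)
      · exact iff_of_false (hout j hj (Or.inr h')) (by omega)
  have hcs : ∀ j (hj : j < (shortcut l a b c).length), j ≠ a + 1 →
      (G.Adj c (shortcut l a b c)[j] ↔ j = a ∨ j = a + 2) := by
    intro j hj hja
    rw [getElem_shortcut_of_ne (by omega) hb.le hj hja, hcl _ _ (by split <;> omega)]
    split_ifs <;> omega
  refine ⟨nodup_shortcut hnd (by omega) hc, fun i j hi hj => ?_⟩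
  by_cases hia : i = a + 1 <;> by_cases hja : j = a + 1
  · subst hia hja
    simp
  · subst hia
    rw [getElem_shortcut_self (by omega) hb.le, hcs j hj hja]
    omega
  · subst hja
    rw [G.adj_comm, getElem_shortcut_self (by omega) hb.le, hcs i hi hia]
    omega
  · rw [getElem_shortcut_of_ne (by omega) hb.le hi hia,
      getElem_shortcut_of_ne (by omega) hb.le hj hja, hadj]
    split_ifs <;> omega

theorem isSolution_shortcut {k : ℕ} {t : Fin k → V}
    (hl : IsSolution G t l) (hab : a + 2 ≤ b) (hb : b < l.length) (hc : c ∉ l)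
    (hca : G.Adj c l[a]) (hcb : G.Adj c l[b])
    (hout : ∀ j (hj : j < l.length), j < a ∨ b < j → ¬ G.Adj c l[j])
    (hterm : ∀ j (hj : j < l.length), a < j → j < b → l[j] ∉ Set.range t) :
    IsSolution G t (shortcut l a b c) := by
  obtain ⟨hind, pos, hmono, hget, h0, hlast⟩ := hl
  have hlen := length_shortcut (c := c) (by omega : a < b) hb.le
  have hpos : ∀ i, (pos i : ℕ) ≤ a ∨ b ≤ pos i := fun i => by
    by_contra! h
    exact hterm _ _ h.1 h.2 ⟨i, (hget i).symm⟩
  let pos' : Fin k → Fin (shortcut l a b c).length := fun i =>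
    ⟨if (pos i : ℕ) ≤ a then pos i else pos i + (a + 2) - b, by
      have := (pos i).2; split <;> omega⟩
  have hpos' : ∀ i, (pos' i : ℕ) = if (pos i : ℕ) ≤ a then (pos i : ℕ) else pos i + (a + 2) - b :=
    fun i => rfl
  refine ⟨isInducedPathList_shortcut hind hab hb hc hca hcb hout, pos', fun i j hij => ?_,
    fun i => ?_, fun i hi => ?_, fun i hi => ?_⟩
  · have := hmono hij
    have := hpos i
    have := hpos j
    rw [Fin.lt_def, hpos', hpos'] at *
    split_ifs <;> omega
  · have := hpos i
    rw [List.get_eq_getElem,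
      getElem_shortcut_of_ne (by omega) hb.le _ (by rw [hpos']; split_ifs <;> omega),
      ← hget i, List.get_eq_getElem]
    congr 1
    rw [hpos']
    split_ifs <;> omega
  · rw [hpos', if_pos (by rw [h0 i hi]; omega), h0 i hi]
  · have := hlast i hi
    rw [hpos', if_neg (by omega), hlen]
    omega

theorem getElem_not_mem_shortcut (hl : l.Nodup) {m : ℕ} (hm : m < l.length) (ham : a < m)
    (hmb : m < b) (hc : l[m] ≠ c) : l[m] ∉ shortcut l a b c := by
  rw [shortcut, List.mem_append, List.mem_cons, not_or, not_or]
  refine ⟨fun h => ?_, hc, fun h => ?_⟩ <;> obtain ⟨i, hi, e⟩ := List.getElem_of_mem h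
  · rw [List.getElem_take, hl.getElem_inj_iff] at e
    rw [List.length_take] at hi
    omega
  · rw [List.getElem_drop, hl.getElem_inj_iff] at e
    omega

theorem IsSolution.lt_of_not_mem_range {k : ℕ} {t : Fin k → V} (hl : IsSolution G t l)
    (hk : 0 < k) {j : ℕ} (hj : j < l.length) (ht : l[j] ∉ Set.range t) :
    0 < j ∧ j + 1 < l.length := by
  obtain ⟨-, pos, -, hget, h0, hlast⟩ := hl
  constructor
  · refine Nat.pos_of_ne_zero fun h => ht ⟨⟨0, hk⟩, ?_⟩
    rw [← hget, List.get_eq_getElem]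
    congr 1
    rw [h0 _ rfl, h]
  · by_contra h
    refine ht ⟨⟨k - 1, by omega⟩, ?_⟩
    rw [← hget, List.get_eq_getElem]
    congr 1
    rw [hlast _ rfl]
    omega

theorem IsInducedPathList.not_mem_of_adj (hl : IsInducedPathList G l) {m : ℕ} (hm1 : 0 < m)
    (hm2 : m + 1 < l.length) (hc : G.Adj l[m] c) (hcp : G.Adj l[m - 1] c)
    (hcq : G.Adj l[m + 1] c) : c ∉ l := by
  intro hmem
  obtain ⟨j, hj, rfl⟩ := List.getElem_of_mem hmem
  rcases (isInducedPathList_iff.mp hl).2 _ _ _ _ |>.mp hc with h | h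
  · subst h
    exact G.irrefl hcq
  · obtain rfl : m - 1 = j := by omega
    exact G.irrefl hcp

theorem ClawFree.index_near_of_adj (hG : ClawFree G) (hl : IsInducedPathList G l) {m : ℕ}
    (hm1 : 0 < m) (hm2 : m + 1 < l.length) (hcp : G.Adj c l[m - 1]) (hcq : G.Adj c l[m + 1])
    {j : ℕ} (hj : j < l.length) (hcj : G.Adj c l[j]) : m ≤ j + 2 ∧ j ≤ m + 2 := by
  obtain ⟨hnd, hadj⟩ := isInducedPathList_iff.mp hl
  by_contra h
  have hne : ∀ i (hi : i < l.length), i ≠ j → l[j] ≠ l[i] := fun i hi hij e =>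
    hij (hnd.getElem_inj_iff.mp e).symm
  rcases hG.adj_or_adj hcp hcq hcj (fun e => by have := hnd.getElem_inj_iff.mp e; omega)
    (fun e => by have := (hadj _ _ _ _).mp e; omega) (hne _ _ (by omega))
    (hne _ _ (by omega)) with e | e
  all_goals have := (hadj _ _ _ _).mp e; omega

theorem IsSolution.exists_not_mem_of_bypass {k : ℕ} {t : Fin k → V} (hl : IsSolution G t l)
    {m : ℕ} (hm1 : 0 < m) (hm2 : m + 1 < l.length) (hc : c ∉ l) (hcp : G.Adj c l[m - 1])
    (hcq : G.Adj c l[m + 1])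
    (hnear : ∀ j (hj : j < l.length), G.Adj c l[j] → m ≤ j + 2 ∧ j ≤ m + 2)
    (hterm : ∀ j (hj : j < l.length), m ≤ j + 1 → j ≤ m + 1 → l[j] ∉ Set.range t) :
    ∃ l' : List V, IsSolution G t l' ∧ l[m] ∉ l' := by
  obtain ⟨a, ha, ham, hma, hca, hleft⟩ : ∃ a, ∃ ha : a < l.length, a < m ∧ m ≤ a + 2 ∧
      G.Adj c l[a] ∧ ∀ j (hj : j < l.length), j < a → ¬ G.Adj c l[j] := by
    by_cases h : ∃ _ : 2 ≤ m, G.Adj c l[m - 2]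
    · obtain ⟨h2, hc2⟩ := h
      exact ⟨m - 2, by omega, by omega, by omega, hc2, fun j hj hja hcj => by
        have := hnear j hj hcj; omega⟩
    · refine ⟨m - 1, _, by omega, by omega, hcp, fun j hj hja hcj => h ?_⟩
      have := hnear j hj hcj
      obtain rfl : j = m - 2 := by omega
      exact ⟨by omega, hcj⟩
  obtain ⟨b, hb, hmb, hbm, hcb, hright⟩ : ∃ b, ∃ hb : b < l.length, m < b ∧ b ≤ m + 2 ∧
      G.Adj c l[b] ∧ ∀ j (hj : j < l.length), b < j → ¬ G.Adj c l[j] := by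
    by_cases h : ∃ _ : m + 2 < l.length, G.Adj c l[m + 2]
    · obtain ⟨h2, hc2⟩ := h
      exact ⟨m + 2, h2, by omega, by omega, hc2, fun j hj hjb hcj => by
        have := hnear j hj hcj; omega⟩
    · refine ⟨m + 1, hm2, by omega, by omega, hcq, fun j hj hjb hcj => h ?_⟩
      have := hnear j hj hcj
      obtain rfl : j = m + 2 := by omega
      exact ⟨hj, hcj⟩
  refine ⟨shortcut l a b c, isSolution_shortcut hl (by omega) hb hc hca hcb
    (fun j hj h => h.elim (hleft j hj) (hright j hj))
    (fun j hj h1 h2 => hterm j hj (by omega) (by omega)),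
    getElem_not_mem_shortcut (isInducedPathList_iff.mp hl.1).1 _ ham hmb
      (fun h => hc (h ▸ List.getElem_mem _))⟩

theorem SimpleInstance.exists_isSolution_not_mem {k : ℕ} {t : Fin k → V}
    (hsi : SimpleInstance G t) (hG : ClawFree G) (f : cycleGraph 5 ↪g G) {u : V}
    (hf : ∀ i, G.Adj u (f i)) (ht : ∀ i, t i ≠ u) (hl : IsSolution G t l) :
    ∃ l' : List V, IsSolution G t l' ∧ u ∉ l' := by
  by_cases hu : u ∉ l
  · exact ⟨l, hl, hu⟩
  obtain ⟨m, hm, rfl⟩ := List.getElem_of_mem (not_not.mp hu)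
  obtain ⟨hnd, hadj⟩ := isInducedPathList_iff.mp hl.1
  obtain ⟨hm1, hm2⟩ := hl.lt_of_not_mem_range (by have := hsi.1; omega) hm
    (fun ⟨i, hi⟩ => ht i hi)
  obtain ⟨i, hpc, hqc⟩ := hG.exists_adj_adj_of_cycle5 f hf
    ((hadj _ _ _ _).mpr (by omega) : G.Adj l[m] l[m - 1])
    ((hadj _ _ _ _).mpr (by omega) : G.Adj l[m] l[m + 1])
    (fun e => by have := hnd.getElem_inj_iff.mp e; omega)
    (fun e => by have := (hadj _ _ _ _).mp e; omega)
  have hnonterm : ∀ j (hj : j < l.length), G.Adj l[j] l[m] → G.Adj l[j] (f i) →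
      l[j] ∉ Set.range t := by
    rintro j hj hju hjc ⟨i', hi'⟩
    rw [← hi'] at hju hjc
    exact hsi.not_adj_of_adj_terminal i' hju hjc (G.ne_of_adj (hf i)) (hf i)
  refine hl.exists_not_mem_of_bypass hm1 hm2 (hl.1.not_mem_of_adj hm1 hm2 (hf i) hpc hqc)
    hpc.symm hqc.symm (fun j hj => hG.index_near_of_adj hl.1 hm1 hm2 hpc.symm hqc.symm hj)
    (fun j hj h1 h2 => ?_)
  rcases (show j = m - 1 ∨ j = m ∨ j = m + 1 by omega) with rfl | rfl | rfl
  · exact hnonterm _ _ ((hadj _ _ _ _).mpr (by omega)) hpc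
  · exact fun ⟨i', hi'⟩ => ht i' hi'
  · exact hnonterm _ _ ((hadj _ _ _ _).mpr (by omega)) hqc

end

theorem stmt6_general {V : Type*} (G : SimpleGraph V) {k : ℕ} (t : Fin k → V)
    (hsi : SimpleInstance G t) (hG : ClawFree G)
    (u : V) (f : SimpleGraph.cycleGraph 5 ↪g G) (hf : ∀ i, G.Adj u (f i))
    (ht : ∀ i, t i ≠ u) :
    (∃ l : List V, IsSolution G t l) ↔
      (∃ l : List {v : V // v ∈ ({v | v ≠ u} : Set V)},
        IsSolution (G.induce {v | v ≠ u}) (fun i => ⟨t i, ht i⟩) l) := by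
  rw [exists_isSolution_induce_iff]
  constructor
  · rintro ⟨l, hl⟩
    obtain ⟨l', hl', hu⟩ := hsi.exists_isSolution_not_mem hG f hf ht hl
    exact ⟨l', hl', fun v hv (e : v = u) => hu (e ▸ hv)⟩
  · rintro ⟨l, hl, -⟩
    exact ⟨l, hl⟩

/-- Lemma 11: in a simple claw-free instance, if the neighborhood of a vertex `u`
contains the vertex set of an induced five-cycle of `G`, then the instance has a
solution if and only if the instance obtained by deleting `u` has a solution. -/
theorem stmt6 {V : Type*} [Fintype V] (G : SimpleGraph V) {k : ℕ} (t : Fin k → V)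
    (hsi : SimpleInstance G t) (hG : ClawFree G)
    (u : V) (f : SimpleGraph.cycleGraph 5 ↪g G) (hf : ∀ i, G.Adj u (f i))
    (ht : ∀ i, t i ≠ u) :
    (∃ l : List V, IsSolution G t l) ↔
      (∃ l : List {v : V // v ∈ ({v | v ≠ u} : Set V)},
        IsSolution (G.induce {v | v ≠ u}) (fun i => ⟨t i, ht i⟩) l) :=
  stmt6_general G t hsi hG u f hf ht
end

section
/- Let G be a connected graph that is not isomorphic to the one-edge graph K_2, and let A be a homogeneous clique of G. Then every vertex of A lies on a triangle of G. -/
/-- A nontrivial clique `A` (a clique with at least two vertices) is homogeneous if every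
vertex outside `A` is adjacent either to all vertices of `A` or to none of them. -/
def IsHomogeneousClique {V : Type*} (G : SimpleGraph V) (A : Set V) : Prop :=
  G.IsClique A ∧ A.Nontrivial ∧
    ∀ v ∉ A, (∀ a ∈ A, G.Adj v a) ∨ (∀ a ∈ A, ¬ G.Adj v a)

/-! If a connected graph has a vertex outside the homogeneous clique `A`, some edge leaves `A`,
and homogeneity makes its outer end adjacent to all of `A`. Hence a vertex `a ∈ A` lies on a
triangle with a second vertex `b ∈ A` and any third vertex: one of `A` itself, or that common
neighbour. A third vertex exists because a graph on two adjacent vertices is `K₂`. -/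

section

variable {V : Type*} {G : SimpleGraph V}

theorem IsHomogeneousClique.exists_forall_adj {A : Set V} (hA : IsHomogeneousClique G A)
    (hG : G.Preconnected) {v : V} (hv : v ∉ A) : ∃ x, ∀ a ∈ A, G.Adj x a := by
  obtain ⟨a, ha⟩ := hA.2.1.nonempty
  obtain ⟨d, -, hdA, hdA'⟩ := (hG a v).some.exists_boundary_dart A ha hv
  refine ⟨d.snd, (hA.2.2 d.snd hdA').resolve_right fun hnone => ?_⟩
  exact hnone d.fst hdA d.adj.symm

theorem SimpleGraph.nonempty_iso_top_fin_two_of_adj {a b : V} (hab : G.Adj a b)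
    (hV : ∀ v, v = a ∨ v = b) : Nonempty (G ≃g (⊤ : SimpleGraph (Fin 2))) := by
  have hG : G = ⊤ := by
    ext u v
    rcases hV u with rfl | rfl <;> rcases hV v with rfl | rfl <;>
      simp [hab, hab.symm, hab.ne, hab.ne.symm]
  have hcard : Nat.card V = 2 :=
    Nat.card_eq_two_iff.2 ⟨a, b, hab.ne, Set.eq_univ_of_forall hV⟩
  have : Finite V := Nat.finite_of_card_ne_zero (by simp [hcard])
  subst hG
  exact ⟨Iso.completeGraph (Finite.equivFinOfCardEq hcard)⟩

end

/-- If `G` is connected, not isomorphic to the one-edge graph `K₂`, and `A` is a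
homogeneous clique of `G`, then every vertex of `A` lies on a triangle of `G`. -/
theorem stmt7 {V : Type*} (G : SimpleGraph V) (hconn : G.Connected)
    (hK2 : ¬ Nonempty (G ≃g (⊤ : SimpleGraph (Fin 2))))
    (A : Set V) (hA : IsHomogeneousClique G A) :
    ∀ a ∈ A, ∃ x y : V, G.Adj a x ∧ G.Adj a y ∧ G.Adj x y := by
  intro a ha
  obtain ⟨b, hb, hba⟩ := hA.2.1.exists_ne a
  have hab : G.Adj a b := hA.1 ha hb hba.symm
  obtain ⟨c, hca, hcb⟩ : ∃ c, c ≠ a ∧ c ≠ b := by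
    by_contra! hV
    exact hK2 <| SimpleGraph.nonempty_iso_top_fin_two_of_adj hab fun v =>
      or_iff_not_imp_left.2 (hV v)
  by_cases hc : c ∈ A
  · exact ⟨b, c, hab, hA.1 ha hc hca.symm, hA.1 hb hc hcb.symm⟩
  · obtain ⟨x, hx⟩ := hA.exists_forall_adj hconn.preconnected hc
    exact ⟨b, x, hab, (hx a ha).symm, (hx b hb).symm⟩
end

section
/- Let (G; t_1,...,t_k) be a simple instance with G quasi-line, let A be a homogeneous clique of G, and let a be a vertex of A. Then no terminal belongs to A, the subgraph G' of G induced by V(G) \ (A \ {a}) is quasi-line, (G'; t_1,...,t_k) is a simple instance, and (G; t_1,...,t_k) has a solution if and only if (G'; t_1,...,t_k) has a solution. -/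
/-- A graph is quasi-line if the neighborhood of every vertex is the union of two cliques. -/
def QuasiLine {V : Type*} (G : SimpleGraph V) : Prop :=
  ∀ u : V, ∃ A B : Set V, G.IsClique A ∧ G.IsClique B ∧ G.neighborSet u = A ∪ B

/-!
Terminals have independent neighbourhoods. Hence a terminal `t ∈ A` has a single neighbour
`b ∈ A`, and by homogeneity `{t, b}` is closed under adjacency, contradicting connectivity and
the distance condition; and a terminal adjacent to `A` would see two adjacent vertices of `A`.
So `G'` keeps every terminal with its neighbourhood, and it is connected because the retraction
collapsing `A` onto `a` sends each edge to an edge or a single vertex. Two vertices of `A` on an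
induced path are consecutive and the earlier one starts the path, since a predecessor would be
adjacent to both. A solution starts at a terminal, so it meets `A` at most once and the
retraction maps it to a solution of `G'`; conversely a solution of `G'` is one of `G`.
-/

section

variable {V W : Type*} {G : SimpleGraph V}

theorem IsHomogeneousClique.adj_iff_adj {A : Set V} (hA : IsHomogeneousClique G A) {x u v : V}
    (hx : x ∉ A) (hu : u ∈ A) (hv : v ∈ A) : G.Adj x u ↔ G.Adj x v := by
  rcases hA.2.2 x hx with h | h
  · exact iff_of_true (h u hu) (h v hv)
  · exact iff_of_false (h u hu) (h v hv)

theorem IsHomogeneousClique.adj_of_adj {A : Set V} (hA : IsHomogeneousClique G A) {x u v : V}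
    (hu : u ∈ A) (hv : v ∈ A) (hxv : x ≠ v) (h : G.Adj x u) : G.Adj x v := by
  by_cases hx : x ∈ A
  · exact hA.1 hx hv hxv
  · exact (hA.adj_iff_adj hx hu hv).1 h

namespace SimpleGraph

theorem Reachable.mem_of_adj_closed {S : Set V} (hS : ∀ x y, G.Adj x y → x ∈ S → y ∈ S)
    {u v : V} (h : G.Reachable u v) (hu : u ∈ S) : v ∈ S := by
  rw [reachable_iff_reflTransGen] at h
  induction h with
  | refl => exact hu
  | tail _ hxy ih => exact hS _ _ hxy ih

theorem Reachable.map_of_adj_or_eq {H : SimpleGraph W} (f : V → W)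
    (hf : ∀ x y, G.Adj x y → f x = f y ∨ H.Adj (f x) (f y)) {u v : V} (h : G.Reachable u v) :
    H.Reachable (f u) (f v) := by
  rw [reachable_iff_reflTransGen] at h ⊢
  refine h.lift' f fun x y hxy => ?_
  rcases hf x y hxy with e | hadj
  · show Relation.ReflTransGen H.Adj (f x) (f y)
    rw [e]
  · exact .single hadj

theorem Connected.of_surjective_adj_or_eq {H : SimpleGraph W} (hG : G.Connected) (f : V → W)
    (hsurj : Function.Surjective f) (hf : ∀ x y, G.Adj x y → f x = f y ∨ H.Adj (f x) (f y)) :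
    H.Connected :=
  haveI := hG.nonempty.map f
  ⟨hsurj.forall₂.2 fun u v => (hG u v).map_of_adj_or_eq f hf⟩

theorem Reachable.dist_map_le {H : SimpleGraph W} (f : G →g H) {u v : V} (h : G.Reachable u v) :
    H.dist (f u) (f v) ≤ G.dist u v := by
  obtain ⟨p, hp⟩ := h.exists_walk_length_eq_dist
  rw [← hp, ← p.length_map f]
  exact dist_le _

theorem ncard_neighborSet_induce {S : Set V} {v : S} (hN : G.neighborSet v ⊆ S) :
    ((G.induce S).neighborSet v).ncard = (G.neighborSet v).ncard :=
  Set.ncard_preimage_of_injective_subset_range Subtype.val_injective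
    fun x hx => ⟨⟨x, hN hx⟩, rfl⟩

end SimpleGraph

open SimpleGraph

theorem QuasiLine.induce (h : QuasiLine G) (S : Set V) : QuasiLine (G.induce S) := by
  intro u
  obtain ⟨B, C, hB, hC, hN⟩ := h u
  refine ⟨Subtype.val ⁻¹' B, Subtype.val ⁻¹' C,
    fun x hx y hy hxy => hB hx hy (Subtype.val_injective.ne hxy),
    fun x hx y hy hxy => hC hx hy (Subtype.val_injective.ne hxy), ?_⟩
  rw [← Set.preimage_union, ← hN]
  rfl

section SimpleInstance

variable {k : ℕ} {t : Fin k → V}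

theorem SimpleInstance.isIndepSet_neighborSet (h : SimpleInstance G t) (i : Fin k) :
    G.IsIndepSet (G.neighborSet (t i)) := by
  intro x hx y hy hxy
  by_cases hi : i.1 = 0 ∨ i.1 = k - 1
  · obtain ⟨c, hc⟩ := Set.ncard_eq_one.1 (h.2.2.1 i hi)
    rw [hc] at hx hy
    exact absurd (hx.trans hy.symm) hxy
  · push Not at hi
    exact (h.2.2.2.1 i hi.1 hi.2).2 x y hx hy hxy

theorem SimpleInstance.notMem_of_isHomogeneousClique (h : SimpleInstance G t) {A : Set V}
    (hA : IsHomogeneousClique G A) (i : Fin k) : t i ∉ A := by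
  intro hti
  obtain ⟨b, hb, hbt⟩ := hA.2.1.exists_ne (t i)
  have htb : G.Adj (t i) b := hA.1 hti hb hbt.symm
  have hN : ∀ x, G.Adj (t i) x → x = b := fun x hx => by
    by_contra hxb
    exact h.isIndepSet_neighborSet i hx htb hxb (hA.adj_of_adj hti hb hxb hx.symm)
  have hclosed : ∀ x y, G.Adj x y → x ∈ ({t i, b} : Set V) → y ∈ ({t i, b} : Set V) := by
    rintro x y hxy (rfl | rfl)
    · exact Or.inr (hN y hxy)
    · by_cases hy : y = t i
      · exact Or.inl hy
      · exact Or.inr (hN y (hA.adj_of_adj hb hti hy hxy.symm).symm)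
  have := Fin.nontrivial_iff_two_le.2 h.1
  obtain ⟨j, hji⟩ := exists_ne i
  have hdist : G.dist (t i) (t j) ≤ 1 := by
    rcases (h.2.2.2.2.2 (t i) (t j)).mem_of_adj_closed hclosed (Or.inl rfl) with hj | hj
    · simp [hj]
    · rw [hj, dist_eq_one_iff_adj.2 htb]
  have := h.2.2.2.2.1 i j hji.symm
  omega

theorem SimpleInstance.notMem_of_adj (h : SimpleInstance G t) {A : Set V}
    (hA : IsHomogeneousClique G A) {i : Fin k} {x : V} (hx : G.Adj (t i) x) : x ∉ A := by
  intro hxA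
  obtain ⟨u, hu, hux⟩ := hA.2.1.exists_ne x
  have htu : G.Adj (t i) u :=
    hA.adj_of_adj hxA hu (fun e => h.notMem_of_isHomogeneousClique hA i (e ▸ hu)) hx
  exact h.isIndepSet_neighborSet i hx htu hux.symm (hA.1 hxA hu hux.symm)

theorem SimpleInstance.induce {S : Set V} {t' : Fin k → S}
    (h : SimpleInstance G (fun i => (t' i : V))) (hN : ∀ i, G.neighborSet (t' i) ⊆ S)
    (hconn : (G.induce S).Connected) : SimpleInstance (G.induce S) t' := by
  obtain ⟨hk, hinj, hend, hmid, hdist, -⟩ := h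
  refine ⟨hk, fun i j hij => hinj (congrArg Subtype.val hij),
    fun i hi => (ncard_neighborSet_induce (hN i)).trans (hend i hi),
    fun i hi hi' => ⟨(ncard_neighborSet_induce (hN i)).trans (hmid i hi hi').1,
      fun x y hx hy hxy => (hmid i hi hi').2 x y hx hy (Subtype.val_injective.ne hxy)⟩,
    fun i j hij => (hdist i j hij).trans ((hconn _ _).dist_map_le (Embedding.induce S).toHom),
    hconn⟩

end SimpleInstance

section Contraction

variable {A : Set V} {a : V}

open Classical in
noncomputable def collapse (A : Set V) (a : V) (x : V) : ({v | v ∉ A \ {a}} : Set V) :=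
  if hx : x ∈ A then ⟨a, fun h => h.2 rfl⟩ else ⟨x, fun h => hx h.1⟩

theorem coe_collapse_of_mem {x : V} (hx : x ∈ A) : (collapse A a x : V) = a := by
  simp [collapse, hx]

theorem coe_collapse_of_notMem {x : V} (hx : x ∉ A) : (collapse A a x : V) = x := by
  simp [collapse, hx]

theorem collapse_coe (s : ({v | v ∉ A \ {a}} : Set V)) : collapse A a s = s := by
  apply Subtype.ext
  by_cases hs : (s : V) ∈ A
  · rw [coe_collapse_of_mem hs]
    by_contra hne
    exact s.2 ⟨hs, fun h => hne h.symm⟩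
  · exact coe_collapse_of_notMem hs

theorem collapse_injOn (ha : a ∈ A) {x y : V} (hxy : x ∈ A → y ∈ A → x = y)
    (h : collapse A a x = collapse A a y) : x = y := by
  have h' := congrArg Subtype.val h
  by_cases hx : x ∈ A <;> by_cases hy : y ∈ A
  · exact hxy hx hy
  · rw [coe_collapse_of_mem hx, coe_collapse_of_notMem hy] at h'
    exact absurd (h' ▸ ha) hy
  · rw [coe_collapse_of_notMem hx, coe_collapse_of_mem hy] at h'
    exact absurd (h' ▸ ha) hx
  · rwa [coe_collapse_of_notMem hx, coe_collapse_of_notMem hy] at h'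

theorem adj_collapse_iff (hA : IsHomogeneousClique G A) (ha : a ∈ A) {x y : V}
    (hxy : x ∈ A → y ∈ A → x = y) :
    (G.induce {v | v ∉ A \ {a}}).Adj (collapse A a x) (collapse A a y) ↔ G.Adj x y := by
  rw [induce_adj]
  by_cases hx : x ∈ A <;> by_cases hy : y ∈ A
  · obtain rfl := hxy hx hy
    exact iff_of_false (G.loopless.irrefl _) (G.loopless.irrefl _)
  · rw [coe_collapse_of_mem hx, coe_collapse_of_notMem hy, G.adj_comm, G.adj_comm x]
    exact hA.adj_iff_adj hy ha hx
  · rw [coe_collapse_of_notMem hx, coe_collapse_of_mem hy]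
    exact hA.adj_iff_adj hx ha hy
  · rw [coe_collapse_of_notMem hx, coe_collapse_of_notMem hy]

theorem collapse_eq_or_adj (hA : IsHomogeneousClique G A) (ha : a ∈ A) {x y : V}
    (hxy : G.Adj x y) :
    collapse A a x = collapse A a y ∨
      (G.induce {v | v ∉ A \ {a}}).Adj (collapse A a x) (collapse A a y) := by
  by_cases h : x ∈ A ∧ y ∈ A
  · exact Or.inl (Subtype.ext ((coe_collapse_of_mem h.1).trans (coe_collapse_of_mem h.2).symm))
  · exact Or.inr ((adj_collapse_iff hA ha fun hx hy => absurd ⟨hx, hy⟩ h).2 hxy)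

end Contraction

section Solution

variable {k : ℕ} {l : List V}

theorem IsInducedPathList.val_eq_zero_of_lt (hl : IsInducedPathList G l) {A : Set V}
    (hA : IsHomogeneousClique G A) {i j : Fin l.length} (hij : i < j) (hi : l.get i ∈ A)
    (hj : l.get j ∈ A) : i.1 = 0 := by
  obtain ⟨hnd, hadj⟩ := hl
  have hget := List.nodup_iff_injective_get.1 hnd
  have hji : j.1 = i.1 + 1 := by
    have := (hadj i j).1 (hA.1 hi hj (hget.ne hij.ne))
    omega
  by_contra hi0
  let h : Fin l.length := ⟨i.1 - 1, by omega⟩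
  have hhj : h ≠ j := fun e => by have := congrArg Fin.val e; simp [h] at this; omega
  have := (hadj h j).1 (hA.adj_of_adj hi hj (hget.ne hhj) ((hadj h i).2 (by simp [h]; omega)))
  simp [h] at this
  omega

theorem IsSolution.eq_of_mem_of_mem {t : Fin k → V} (hl : IsSolution G t l) {A : Set V}
    (hA : IsHomogeneousClique G A) (hk : 0 < k) (ht : ∀ i, t i ∉ A) {x y : V} (hx : x ∈ l)
    (hy : y ∈ l) (hxA : x ∈ A) (hyA : y ∈ A) : x = y := by
  obtain ⟨hind, pos, -, hpos, h0, -⟩ := hl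
  have hfirst : ∀ i j : Fin l.length, i < j → l.get i ∈ A → l.get j ∈ A → False :=
    fun i j hij hi hj => by
      have : pos ⟨0, hk⟩ = i :=
        Fin.ext ((h0 _ rfl).trans (hind.val_eq_zero_of_lt hA hij hi hj).symm)
      exact ht ⟨0, hk⟩ (hpos ⟨0, hk⟩ ▸ this ▸ hi)
  obtain ⟨i, rfl⟩ := List.mem_iff_get.1 hx
  obtain ⟨j, rfl⟩ := List.mem_iff_get.1 hy
  rcases lt_trichotomy i j with hij | rfl | hij
  · exact (hfirst i j hij hxA hyA).elim
  · rfl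
  · exact (hfirst j i hij hyA hxA).elim

theorem IsSolution.map {H : SimpleGraph W} {t : Fin k → V} {t' : Fin k → W}
    (hl : IsSolution G t l) (f : V → W) (hinj : ∀ x ∈ l, ∀ y ∈ l, f x = f y → x = y)
    (hadj : ∀ x ∈ l, ∀ y ∈ l, H.Adj (f x) (f y) ↔ G.Adj x y) (ht : ∀ i, f (t i) = t' i) :
    IsSolution H t' (l.map f) := by
  obtain ⟨⟨hnd, hpath⟩, pos, hmono, hpos, h0, hlast⟩ := hl
  have hlen := l.length_map f
  refine ⟨⟨hnd.map_on hinj, fun i j => ?_⟩, fun i => Fin.cast hlen.symm (pos i),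
    fun i j hij => hmono hij, fun i => ?_, h0, fun i hi => by simpa using hlast i hi⟩
  · simp only [List.get_eq_getElem, List.getElem_map]
    exact (hadj _ (List.getElem_mem _) _ (List.getElem_mem _)).trans
      (hpath (i.cast hlen) (j.cast hlen))
  · simp only [List.get_eq_getElem, List.getElem_map, Fin.val_cast]
    rw [← ht i, ← hpos i]
    rfl

end Solution

end

theorem stmt8_general {V : Type*} (G : SimpleGraph V) {k : ℕ} (t : Fin k → V)
    (hsi : SimpleInstance G t) (hql : QuasiLine G)
    (A : Set V) (hA : IsHomogeneousClique G A) (a : V) (ha : a ∈ A) :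
    ∃ hnt : ∀ i, t i ∉ A,
      QuasiLine (G.induce {v | v ∉ A \ {a}}) ∧
      SimpleInstance (G.induce {v | v ∉ A \ {a}})
        (fun i => ⟨t i, fun hm => hnt i hm.1⟩) ∧
      ((∃ l : List V, IsSolution G t l) ↔
        ∃ l : List {v : V // v ∈ ({v | v ∉ A \ {a}} : Set V)},
          IsSolution (G.induce {v | v ∉ A \ {a}}) (fun i => ⟨t i, fun hm => hnt i hm.1⟩) l) := by
  have hnt : ∀ i, t i ∉ A := hsi.notMem_of_isHomogeneousClique hA
  have hconn : (G.induce {v | v ∉ A \ {a}}).Connected :=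
    hsi.2.2.2.2.2.of_surjective_adj_or_eq (collapse A a) (fun s => ⟨s, collapse_coe s⟩)
      fun _ _ => collapse_eq_or_adj hA ha
  refine ⟨hnt, hql.induce _, hsi.induce (fun i x hx hm => hsi.notMem_of_adj hA hx hm.1) hconn,
    ⟨fun ⟨l, hl⟩ => ?_, fun ⟨l, hl⟩ => ?_⟩⟩
  · have hlA : ∀ x ∈ l, ∀ y ∈ l, x ∈ A → y ∈ A → x = y := fun x hx y hy =>
      hl.eq_of_mem_of_mem hA (two_pos.trans_le hsi.1) hnt hx hy
    exact ⟨_, hl.map (collapse A a) (fun x hx y hy => collapse_injOn ha (hlA x hx y hy))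
      (fun x hx y hy => adj_collapse_iff hA ha (hlA x hx y hy))
      fun i => Subtype.ext (coe_collapse_of_notMem (hnt i))⟩
  · exact ⟨_, hl.map Subtype.val (fun _ _ _ _ => Subtype.ext) (fun _ _ _ _ => Iff.rfl)
      fun _ => rfl⟩

/-- Lemma 12: in a simple quasi-line instance with a homogeneous clique `A` and `a ∈ A`,
no terminal lies in `A`; moreover the graph `G'` obtained by contracting `A` to `a`
(i.e. the subgraph induced on `V(G) \ (A \ {a})`) is quasi-line, the instance `(G'; t)`
is simple, and `(G; t)` has a solution if and only if `(G'; t)` has one. -/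
theorem stmt8 {V : Type*} [Fintype V] (G : SimpleGraph V) {k : ℕ} (t : Fin k → V)
    (hsi : SimpleInstance G t) (hql : QuasiLine G)
    (A : Set V) (hA : IsHomogeneousClique G A) (a : V) (ha : a ∈ A) :
    ∃ hnt : ∀ i, t i ∉ A,
      QuasiLine (G.induce {v | v ∉ A \ {a}}) ∧
      SimpleInstance (G.induce {v | v ∉ A \ {a}})
        (fun i => ⟨t i, fun hm => hnt i hm.1⟩) ∧
      ((∃ l : List V, IsSolution G t l) ↔
        ∃ l : List {v : V // v ∈ ({v | v ∉ A \ {a}} : Set V)},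
          IsSolution (G.induce {v | v ∉ A \ {a}}) (fun i => ⟨t i, fun hm => hnt i hm.1⟩) l) :=
  stmt8_general G t hsi hql A hA a ha
end

section
/- Let A and B be two disjoint cliques forming a homogeneous pair in a graph G, and let P be an induced path in G neither of whose two endpoints belongs to A. Then P contains at most one vertex of A. -/
/-- Two disjoint cliques `A` and `B` form a homogeneous pair if at least one of them has
at least two vertices and every vertex outside `A ∪ B` is adjacent either to all
vertices of `A` or to none of them, and likewise for `B`. -/
def IsHomogeneousPair {V : Type*} (G : SimpleGraph V) (A B : Set V) : Prop :=
  G.IsClique A ∧ G.IsClique B ∧ Disjoint A B ∧ (A.Nontrivial ∨ B.Nontrivial) ∧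
    ∀ v, v ∉ A → v ∉ B →
      ((∀ a ∈ A, G.Adj v a) ∨ (∀ a ∈ A, ¬ G.Adj v a)) ∧
      ((∀ b ∈ B, G.Adj v b) ∨ (∀ b ∈ B, ¬ G.Adj v b))


/-!
Two vertices of `A` on the path are adjacent, so they are consecutive, `x = l[i+1]` and
`y = l[i+2]`, and since the endpoints avoid `A` both have outer neighbours `p = l[i]` and
`q = l[i+3]` on the path. Now `p` sees `x` but not `y`, so `p` is neither complete nor
anticomplete to `A`; as `A` is a clique, `p ∉ A`, hence `p ∈ B`. Symmetrically `q ∈ B`,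
so `p` and `q` are adjacent, a chord of the induced path.
-/

namespace IsInducedPathList

variable {V : Type*} {G : SimpleGraph V} {l : List V}

theorem adj_getElem_iff (hl : IsInducedPathList G l) {i j : ℕ} (hi : i < l.length)
    (hj : j < l.length) : G.Adj l[i] l[j] ↔ i + 1 = j ∨ j + 1 = i :=
  hl.2 ⟨i, hi⟩ ⟨j, hj⟩

theorem exists_consecutive_of_adj (hl : IsInducedPathList G l) {x y : V} (hx : x ∈ l)
    (hy : y ∈ l) (hxy : G.Adj x y) :
    ∃ i, ∃ h : i + 1 < l.length,
      (l[i] = x ∧ l[i + 1] = y) ∨ (l[i] = y ∧ l[i + 1] = x) := by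
  obtain ⟨i, hi, rfl⟩ := List.getElem_of_mem hx
  obtain ⟨j, hj, rfl⟩ := List.getElem_of_mem hy
  rcases (hl.adj_getElem_iff hi hj).mp hxy with rfl | rfl
  · exact ⟨i, hj, Or.inl ⟨rfl, rfl⟩⟩
  · exact ⟨j, hi, Or.inr ⟨rfl, rfl⟩⟩

end IsInducedPathList

namespace IsHomogeneousPair

variable {V : Type*} {G : SimpleGraph V} {A B : Set V}

theorem mem_right_of_adj_of_not_adj (hAB : IsHomogeneousPair G A B) {v a a' : V}
    (ha : a ∈ A) (ha' : a' ∈ A) (hva : G.Adj v a) (hva' : ¬ G.Adj v a') (hv : v ≠ a') :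
    v ∈ B := by
  have hvA : v ∉ A := fun hvA => hva' (hAB.1 hvA ha' hv)
  by_contra hvB
  rcases (hAB.2.2.2.2 v hvA hvB).1 with hall | hnone
  · exact hva' (hall a' ha')
  · exact hnone a ha hva

theorem getElem_notMem_of_induced_path (hAB : IsHomogeneousPair G A B) {l : List V}
    (hl : IsInducedPathList G l) {i : ℕ} (h : i + 3 < l.length) (hx : l[i + 1] ∈ A) :
    l[i + 2] ∉ A := by
  intro hy
  have hne {j k : ℕ} (hj : j < l.length) (hk : k < l.length) (hjk : j ≠ k) : l[j] ≠ l[k] :=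
    hl.1.getElem_inj_iff.not.mpr hjk
  have hp : l[i] ∈ B := hAB.mem_right_of_adj_of_not_adj hx hy
    (by rw [hl.adj_getElem_iff]; omega) (by rw [hl.adj_getElem_iff]; omega) (hne _ _ (by omega))
  have hq : l[i + 3] ∈ B := hAB.mem_right_of_adj_of_not_adj hy hx
    (by rw [hl.adj_getElem_iff]; omega) (by rw [hl.adj_getElem_iff]; omega) (hne _ _ (by omega))
  have hpq := hAB.2.1 hp hq (hne _ _ (by omega))
  rw [hl.adj_getElem_iff] at hpq
  omega

end IsHomogeneousPair

/-- If `(A, B)` is a homogeneous pair of cliques of `G` and `P` is an induced path of `G`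
neither of whose endpoints belongs to `A`, then `P` contains at most one vertex of `A`. -/
theorem stmt9 {V : Type*} (G : SimpleGraph V) (A B : Set V)
    (hAB : IsHomogeneousPair G A B)
    (l : List V) (hl : IsInducedPathList G l) (hne : l ≠ [])
    (hh : l.head hne ∉ A) (hla : l.getLast hne ∉ A) :
    ∀ x ∈ l, ∀ y ∈ l, x ∈ A → y ∈ A → x = y := by
  intro x hx y hy hxA hyA
  by_contra hxy
  obtain ⟨i, hi, hedge⟩ := hl.exists_consecutive_of_adj hx hy (hAB.1 hxA hyA hxy)
  have hmem : l[i] ∈ A ∧ l[i + 1] ∈ A := by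
    rcases hedge with ⟨h₁, h₂⟩ | ⟨h₁, h₂⟩ <;> rw [h₁, h₂] <;> tauto
  rw [List.head_eq_getElem] at hh
  rw [List.getLast_eq_getElem] at hla
  obtain _ | k := i
  · exact hh hmem.1
  obtain hk | hk := Nat.lt_or_ge (k + 3) l.length
  · exact hAB.getElem_notMem_of_induced_path hl hk hmem.1 hmem.2
  · exact hla (by simpa [show l.length - 1 = k + 2 by omega] using hmem.2)
end

section
/- Let G be a linear interval graph with vertex set V ⊂ ℝ and interval collection I, and let v_1, v_2, ..., v_p (p ≥ 2) be the consecutive vertices of an induced path in G. Then the sequence v_1, v_2, ..., v_p is strictly monotone: either v_1 < v_2 < ... < v_p or v_1 > v_2 > ... > v_p. -/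
section Monotone

open Order

variable {ι α : Type*} [LinearOrder ι] [SuccOrder ι] [IsSuccArchimedean ι] [LinearOrder α]
  {f : ι → α}

theorem lt_succ_iff_lt_succ_of_le
    (hturn : ∀ a b c, a ⋖ b → b ⋖ c → (f a < f b ↔ f b < f c))
    {a b : ι} (hab : a ≤ b) (hb : ¬IsMax b) :
    f a < f (succ a) ↔ f b < f (succ b) := by
  induction hab using Succ.rec with
  | rfl => rfl
  | succ n _ ih =>
    have hn : ¬IsMax n := fun h => hb (h.succ_eq.symm ▸ h)
    exact (ih hn).trans <|
      hturn _ _ _ (covBy_succ_of_not_isMax hn) (covBy_succ_of_not_isMax hb)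

theorem strictMono_or_strictAnti_of_covBy
    (hne : ∀ a b, a ⋖ b → f a ≠ f b)
    (hturn : ∀ a b c, a ⋖ b → b ⋖ c → (f a < f b ↔ f b < f c)) :
    StrictMono f ∨ StrictAnti f := by
  by_cases hinc : ∃ a, ¬IsMax a ∧ f a < f (succ a)
  · obtain ⟨a₀, ha₀, hlt⟩ := hinc
    refine Or.inl (strictMono_of_lt_succ fun a ha => ?_)
    rcases le_total a₀ a with h | h
    · exact (lt_succ_iff_lt_succ_of_le hturn h ha).1 hlt
    · exact (lt_succ_iff_lt_succ_of_le hturn h ha₀).2 hlt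
  · push Not at hinc
    refine Or.inr (strictAnti_of_succ_lt fun a ha => ?_)
    exact (hinc a ha).lt_of_ne' (hne _ _ (covBy_succ_of_not_isMax ha))

end Monotone

namespace SimpleGraph

variable {α : Type*}

def IsUmbrellaOrdering [Preorder α] (G : SimpleGraph α) : Prop :=
  ∀ ⦃a b c : α⦄, G.Adj a c → a < b → b < c → G.Adj a b ∧ G.Adj b c

theorem isUmbrellaOrdering_of_adj_iff [Preorder α] {S : Set α} {G : SimpleGraph S}
    {I : Set (α × α)}
    (hadj : ∀ a b : S, G.Adj a b ↔
      a ≠ b ∧ ∃ p ∈ I, (a : α) ∈ Set.Icc p.1 p.2 ∧ (b : α) ∈ Set.Icc p.1 p.2) :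
    G.IsUmbrellaOrdering := by
  intro a b c hac hab hbc
  obtain ⟨-, p, hp, ha, hc⟩ := (hadj a c).1 hac
  have hb : (b : α) ∈ Set.Icc p.1 p.2 :=
    ⟨ha.1.trans (Subtype.coe_le_coe.2 hab.le), (Subtype.coe_le_coe.2 hbc.le).trans hc.2⟩
  exact ⟨(hadj a b).2 ⟨hab.ne, p, hp, ha, hb⟩, (hadj b c).2 ⟨hbc.ne, p, hp, hb, hc⟩⟩

theorem IsUmbrellaOrdering.lt_iff_lt_of_adj_of_adj [LinearOrder α] {G : SimpleGraph α}
    (hG : G.IsUmbrellaOrdering) {a b c : α} (hab : G.Adj a b) (hbc : G.Adj b c)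
    (hac : ¬G.Adj a c) (hne : a ≠ c) :
    a < b ↔ b < c := by
  rcases hne.lt_or_gt with hlt | hlt
  · have hab' : a < b := (hab.ne.symm.lt_or_gt).resolve_left
      fun hba => hac (hG hbc hba hlt).2
    have hbc' : b < c := (hbc.ne.symm.lt_or_gt).resolve_left
      fun hcb => hac (hG hab hlt hcb).1
    exact iff_of_true hab' hbc'
  · have hba : b < a := (hab.ne.lt_or_gt).resolve_left
      fun hab' => hac (hG hbc.symm hlt hab').1.symm
    have hcb : c < b := (hbc.ne.lt_or_gt).resolve_left
      fun hbc' => hac (hG hab.symm hbc' hlt).2.symm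
    exact iff_of_false hba.not_gt hcb.not_gt

end SimpleGraph

theorem IsInducedPathList.strictMono_or_strictAnti {α : Type*} [LinearOrder α]
    {G : SimpleGraph α} (hG : G.IsUmbrellaOrdering) {l : List α} (hl : IsInducedPathList G l) :
    StrictMono l.get ∨ StrictAnti l.get := by
  obtain ⟨hnodup, hadj⟩ := hl
  have hinj : Function.Injective l.get := List.nodup_iff_injective_get.1 hnodup
  have hadj_covBy : ∀ i j, i ⋖ j → G.Adj (l.get i) (l.get j) := fun i j hij =>
    (hadj i j).2 (Or.inl (Nat.covBy_iff_add_one_eq.1 (Fin.covBy_iff.1 hij)))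
  refine strictMono_or_strictAnti_of_covBy (fun i j hij => (hadj_covBy i j hij).ne) ?_
  intro i j k hij hjk
  have hij' := Nat.covBy_iff_add_one_eq.1 (Fin.covBy_iff.1 hij)
  have hjk' := Nat.covBy_iff_add_one_eq.1 (Fin.covBy_iff.1 hjk)
  refine hG.lt_iff_lt_of_adj_of_adj (hadj_covBy i j hij) (hadj_covBy j k hjk) ?_ ?_
  · rw [hadj]
    omega
  · intro h
    have := congrArg Fin.val (hinj h)
    omega

theorem stmt12_general (S : Set ℝ) (I : Set (ℝ × ℝ))
    (G : SimpleGraph S)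
    (hadj : ∀ a b : S, G.Adj a b ↔
      a ≠ b ∧ ∃ p ∈ I, (a : ℝ) ∈ Set.Icc p.1 p.2 ∧ (b : ℝ) ∈ Set.Icc p.1 p.2)
    (l : List S) (hl : IsInducedPathList G l) :
    (∀ i j : Fin l.length, i < j → (l.get i : ℝ) < (l.get j : ℝ)) ∨
    (∀ i j : Fin l.length, i < j → (l.get j : ℝ) < (l.get i : ℝ)) := by
  rcases hl.strictMono_or_strictAnti (SimpleGraph.isUmbrellaOrdering_of_adj_iff hadj) with h | h
  · exact Or.inl ((Subtype.strictMono_coe _).comp h)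
  · exact Or.inr ((Subtype.strictMono_coe _).comp_strictAnti h)

/-- Let `G` be a linear interval graph: its vertices form a finite set `S` of reals, and
two distinct vertices are adjacent exactly when they lie in a common closed interval of
the collection `I` (an interval being recorded by its pair of endpoints). Then the
consecutive vertices `v_1, …, v_p` (`p ≥ 2`) of any induced path of `G` form a strictly
monotone sequence of real numbers. -/
theorem stmt12 (S : Set ℝ) (hS : S.Finite) (I : Set (ℝ × ℝ))
    (G : SimpleGraph S)
    (hadj : ∀ a b : S, G.Adj a b ↔
      a ≠ b ∧ ∃ p ∈ I, (a : ℝ) ∈ Set.Icc p.1 p.2 ∧ (b : ℝ) ∈ Set.Icc p.1 p.2)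
    (l : List S) (hl : IsInducedPathList G l) (hlen : 2 ≤ l.length) :
    (∀ i j : Fin l.length, i < j → (l.get i : ℝ) < (l.get j : ℝ)) ∨
    (∀ i j : Fin l.length, i < j → (l.get j : ℝ) < (l.get i : ℝ)) :=
  stmt12_general S I G hadj l hl
end

section
/- Let G be a graph and let e_1, ..., e_p (p ≥ 1) be distinct edges of G. Then e_1, ..., e_p are the consecutive vertices of an induced path in the line graph L(G) if and only if there exist distinct vertices v_0, v_1, ..., v_p of G such that e_i is the edge joining v_{i-1} and v_i for every i (i.e., e_1, ..., e_p are the consecutive edges of a path in G). -/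
section

open Function SimpleGraph

def IsInducedPathFn {α : Type*} (H : SimpleGraph α) {n : ℕ} (f : Fin n → α) : Prop :=
  Injective f ∧ ∀ i j : Fin n, H.Adj (f i) (f j) ↔ (i.1 + 1 = j.1 ∨ j.1 + 1 = i.1)

theorem isInducedPathList_ofFn_iff {α : Type*} (H : SimpleGraph α) {n : ℕ} (f : Fin n → α) :
    IsInducedPathList H (List.ofFn f) ↔ IsInducedPathFn H f := by
  refine and_congr List.nodup_ofFn ?_
  simp only [List.get_ofFn]
  exact (finCongr List.length_ofFn).forall_congr fun {i} =>
    (finCongr List.length_ofFn).forall_congr fun {j} => Iff.rfl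

theorem IsInducedPathFn.init {α : Type*} {H : SimpleGraph α} {n : ℕ} {f : Fin (n + 1) → α}
    (h : IsInducedPathFn H f) : IsInducedPathFn H (Fin.init f) :=
  ⟨h.1.comp (Fin.castSucc_injective n), fun i j => h.2 i.castSucc j.castSucc⟩

variable {V : Type*} {G : SimpleGraph V}

theorem isInducedPathFn_lineGraph_of_path {n : ℕ} {e : Fin n → G.edgeSet}
    {v : Fin (n + 1) → V} (hv : Injective v)
    (hev : ∀ i, (e i : Sym2 V) = s(v i.castSucc, v i.succ)) :
    IsInducedPathFn G.lineGraph e := by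
  refine ⟨fun i j hij => ?_, fun i j => ?_⟩
  · have := congrArg Subtype.val hij
    simp only [hev, Sym2.eq_iff, hv.eq_iff, Fin.ext_iff, Fin.val_succ, Fin.val_castSucc] at this
    ext; omega
  · rw [lineGraph_adj_iff_exists]
    simp only [hev, Sym2.mem_iff, ne_eq, Subtype.ext_iff, Sym2.eq_iff, or_and_right, exists_or,
      exists_eq_left, hv.eq_iff, Fin.ext_iff, Fin.val_succ, Fin.val_castSucc]
    omega

theorem exists_path_of_mem_edgeSet {x : Sym2 V} (hx : x ∈ G.edgeSet) {w : V} (hw : w ∈ x) :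
    ∃ v : Fin 2 → V, Injective v ∧ x = s(v 0, v 1) ∧ v 1 = w := by
  obtain ⟨u, rfl⟩ := Sym2.mem_iff_exists.mp hw
  refine ⟨![u, w], ?_, Sym2.eq_swap, rfl⟩
  have hne := G.ne_of_adj hx
  intro i j
  fin_cases i <;> fin_cases j <;> simp [hne, hne.symm]

theorem exists_path_of_path_init {n : ℕ} {e : Fin (n + 1) → G.edgeSet}
    (he : IsInducedPathFn G.lineGraph e) {v : Fin (n + 1) → V} (hv : Injective v)
    (hev : ∀ i : Fin n, (e i.castSucc : Sym2 V) = s(v i.castSucc, v i.succ))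
    (hlast : v (Fin.last n) ∈ (e (Fin.last n) : Sym2 V)) :
    ∃ w : Fin (n + 2) → V, Injective w ∧ ∀ i, (e i : Sym2 V) = s(w i.castSucc, w i.succ) := by
  obtain ⟨u, hu⟩ := Sym2.mem_iff_exists.mp hlast
  refine ⟨Fin.snoc v u, Fin.snoc_injective_of_injective hv ?_, Fin.lastCases ?_ fun i => ?_⟩
  · rintro ⟨k, rfl⟩
    induction k using Fin.lastCases with
    | last =>
      exact G.not_isDiag_of_mem_edgeSet (hu ▸ (e (Fin.last n)).2) (Sym2.mk_isDiag_iff.mpr rfl)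
    | cast j =>
      have hshare : G.lineGraph.Adj (e j.castSucc) (e (Fin.last n)) := by
        refine lineGraph_adj_iff_exists.mpr ⟨fun h => ?_, v j.castSucc, ?_, ?_⟩
        · exact (Fin.castSucc_lt_last j).ne (he.1 h)
        · rw [hev]; exact Sym2.mem_mk_left _ _
        · rw [hu]; exact Sym2.mem_mk_right _ _
      have hj : j.succ = Fin.last n := by
        have := (he.2 _ _).mp hshare
        simp only [Fin.val_castSucc, Fin.val_last] at this
        ext; simp only [Fin.val_succ, Fin.val_last]; omega
      refine (Fin.castSucc_lt_last j).ne (he.1 (Subtype.ext ?_))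
      rw [hev, hu, hj, Sym2.eq_swap]
  · simp [hu]
  · rw [Fin.succ_castSucc, Fin.snoc_castSucc, Fin.snoc_castSucc, hev]

theorem last_mem_of_path_init {n : ℕ} {e : Fin (n + 3) → G.edgeSet}
    (he : IsInducedPathFn G.lineGraph e) {v : Fin (n + 3) → V}
    (hev : ∀ i : Fin (n + 2), (e i.castSucc : Sym2 V) = s(v i.castSucc, v i.succ)) :
    v (Fin.last _) ∈ (e (Fin.last _) : Sym2 V) := by
  obtain ⟨-, w, hw, hwlast⟩ := lineGraph_adj_iff_exists.mp
    ((he.2 (Fin.last (n + 1)).castSucc (Fin.last (n + 2))).mpr (Or.inl rfl))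
  rw [hev, Sym2.mem_iff] at hw
  rcases hw with rfl | rfl
  · have hprev : v (Fin.last (n + 1)).castSucc ∈ (e (Fin.last n).castSucc.castSucc : Sym2 V) := by
      rw [hev, Fin.succ_castSucc, Fin.succ_last]; exact Sym2.mem_mk_right _ _
    have hadj := lineGraph_adj_iff_exists.mpr
      ⟨fun h => by simpa [Fin.ext_iff] using he.1 h, _, hprev, hwlast⟩
    exact absurd ((he.2 _ _).mp hadj) (by simp; omega)
  · rwa [Fin.succ_last] at hwlast

theorem exists_path_of_isInducedPathFn_lineGraph :
    ∀ {n : ℕ} {e : Fin (n + 1) → G.edgeSet}, IsInducedPathFn G.lineGraph e →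
      ∃ v : Fin (n + 2) → V, Injective v ∧ ∀ i, (e i : Sym2 V) = s(v i.castSucc, v i.succ)
  | 0, e, _ => by
    obtain ⟨v, hv, hev, -⟩ := exists_path_of_mem_edgeSet (e 0).2 (Sym2.out_fst_mem (e 0 : Sym2 V))
    exact ⟨v, hv, fun i => by simpa [Fin.fin_one_eq_zero i] using hev⟩
  | 1, e, he => by
    obtain ⟨-, w, hw0, hw1⟩ := lineGraph_adj_iff_exists.mp ((he.2 0 1).mpr (Or.inl rfl))
    obtain ⟨v, hv, hev, rfl⟩ := exists_path_of_mem_edgeSet (e 0).2 hw0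
    exact exists_path_of_path_init he hv (fun i => by simpa [Fin.fin_one_eq_zero i] using hev) hw1
  | n + 2, e, he => by
    obtain ⟨v, hv, hev⟩ := exists_path_of_isInducedPathFn_lineGraph he.init
    exact exists_path_of_path_init he hv hev (last_mem_of_path_init he hev)

end

theorem stmt13_general {V : Type*} (G : SimpleGraph V) {p : ℕ} (hp : 1 ≤ p)
    (e : Fin p → G.edgeSet) :
    IsInducedPathList G.lineGraph (List.ofFn e) ↔
      ∃ v : Fin (p + 1) → V, Function.Injective v ∧
        ∀ i : Fin p, (e i : Sym2 V) = s(v i.castSucc, v i.succ) := by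
  obtain ⟨n, rfl⟩ : ∃ n, p = n + 1 := ⟨p - 1, by omega⟩
  rw [isInducedPathList_ofFn_iff]
  exact ⟨exists_path_of_isInducedPathFn_lineGraph,
    fun ⟨_, hv, hev⟩ => isInducedPathFn_lineGraph_of_path hv hev⟩

/-- Distinct edges `e 0, …, e (p-1)` of `G` (with `p ≥ 1`) are the consecutive vertices
of an induced path of the line graph `L(G)` if and only if there are distinct vertices
`v 0, …, v p` of `G` such that `e i` joins `v i` and `v (i+1)` for every `i`, i.e. the
`e i` are the consecutive edges of a path of `G`. -/
theorem stmt13 {V : Type*} (G : SimpleGraph V) {p : ℕ} (hp : 1 ≤ p)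
    (e : Fin p → G.edgeSet) (he : Function.Injective e) :
    IsInducedPathList G.lineGraph (List.ofFn e) ↔
      ∃ v : Fin (p + 1) → V, Function.Injective v ∧
        ∀ i : Fin p, (e i : Sym2 V) = s(v i.castSucc, v i.succ) :=
  stmt13_general G hp e
end

section
/- Let G be a connected claw-free graph and let u be a vertex of G whose neighborhood N(u) contains the vertex set of an induced cycle of G of length five. Then u is not a cut-vertex of G, i.e., the subgraph of G induced by V(G) \ {u} is connected. -/
/-!
Two non-adjacent vertices `f 0`, `f 2` of the five-cycle lie in `N(u)` and are joined by the path
`f 0 f 1 f 2` avoiding `u`. By claw-freeness at `u`, every other neighbour of `u` is adjacent to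
`f 0` or `f 2`, so all of `N(u)` lies in one component of `G - u`; since `G` is connected, every
vertex of `G - u` reaches `N(u)` without passing through `u`.
-/

namespace SimpleGraph

variable {V : Type*} {G : SimpleGraph V}

theorem Connected.induce_ne_of_forall_adj_reachable (hG : G.Connected) {u a : V} (ha : a ≠ u)
    (h : ∀ w (hw : G.Adj u w), (G.induce {v | v ≠ u}).Reachable ⟨w, hw.ne'⟩ ⟨a, ha⟩) :
    (G.induce {v | v ≠ u}).Connected := by
  have reach : ∀ v (hv : v ≠ u), (G.induce {v | v ≠ u}).Reachable ⟨v, hv⟩ ⟨a, ha⟩ := by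
    intro v hv
    obtain ⟨p⟩ := hG.preconnected v a
    induction p with
    | nil => rfl
    | @cons x y _ hxy p ih =>
      by_cases hy : y = u
      · subst hy
        exact h x hxy.symm
      · exact (show (G.induce {v | v ≠ u}).Adj ⟨x, hv⟩ ⟨y, hy⟩ from hxy).reachable.trans
          (ih ha h hy)
  exact (connected_iff _).2 ⟨fun x y => (reach x x.2).trans (reach y y.2).symm, ⟨⟨a, ha⟩⟩⟩

end SimpleGraph

namespace ClawFree

variable {V : Type*} {G : SimpleGraph V}

theorem adj_or_adj_s15 (hG : ClawFree G) {u w a b : V}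
    (hw : G.Adj u w) (ha : G.Adj u a) (hb : G.Adj u b) (hab : a ≠ b) (hnab : ¬ G.Adj a b)
    (hwa : w ≠ a) (hwb : w ≠ b) : G.Adj w a ∨ G.Adj w b := by
  by_contra! h
  exact hG ⟨u, w, a, b, hw, ha, hb, hwa, hwb, hab, h.1, h.2, hnab⟩

theorem induce_ne_reachable_of_adj (hG : ClawFree G) {u a b : V}
    (ha : G.Adj u a) (hb : G.Adj u b) (hab : a ≠ b) (hnab : ¬ G.Adj a b)
    (hrab : (G.induce {v | v ≠ u}).Reachable ⟨a, ha.ne'⟩ ⟨b, hb.ne'⟩)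
    {w : V} (hw : G.Adj u w) :
    (G.induce {v | v ≠ u}).Reachable ⟨w, hw.ne'⟩ ⟨a, ha.ne'⟩ := by
  by_cases hwa : w = a
  · subst hwa; rfl
  by_cases hwb : w = b
  · subst hwb; exact hrab.symm
  rcases hG.adj_or_adj_s15 hw ha hb hab hnab hwa hwb with h | h
  · exact (show (G.induce {v | v ≠ u}).Adj ⟨w, hw.ne'⟩ ⟨a, ha.ne'⟩ from h).reachable
  · exact (show (G.induce {v | v ≠ u}).Adj ⟨w, hw.ne'⟩ ⟨b, hb.ne'⟩ from h).reachable.trans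
      hrab.symm

end ClawFree

/-- If `G` is a connected claw-free graph and the neighborhood of a vertex `u` contains
the vertex set of an induced five-cycle of `G`, then `u` is not a cut-vertex: the
subgraph induced on `V(G) \ {u}` is connected. -/
theorem stmt15 {V : Type*} (G : SimpleGraph V) (hG : ClawFree G) (hconn : G.Connected)
    (u : V) (f : SimpleGraph.cycleGraph 5 ↪g G) (hf : ∀ i, G.Adj u (f i)) :
    (G.induce {v | v ≠ u}).Connected := by
  have hf_adj : ∀ i j, (SimpleGraph.cycleGraph 5).Adj i j →
      (G.induce {v | v ≠ u}).Adj ⟨f i, (hf i).ne'⟩ ⟨f j, (hf j).ne'⟩ :=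
    fun i j h => f.map_rel_iff.2 h
  have hr02 := (hf_adj 0 1 (by decide)).reachable.trans (hf_adj 1 2 (by decide)).reachable
  have hn02 : ¬ G.Adj (f 0) (f 2) := by
    rw [f.map_rel_iff]
    decide
  exact hconn.induce_ne_of_forall_adj_reachable (hf 0).ne' fun w hw =>
    hG.induce_ne_reachable_of_adj (hf 0) (hf 2) (f.injective.ne (by decide)) hn02 hr02 hw
end
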